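/- Over a complete non-Archimedean field, any two diagonalizable norms on a finite dimensional vector space admit a simultaneous orthogonal basis: there exists a basis (e_i) of V that is orthogonal for both norms. -/

import Mathlib

def IsVNorm (K : Type*) [NormedField K] {V : Type*} [AddCommGroup V] [Module K V]
    (f : V → ℝ) : Prop :=
  (∀ v, 0 ≤ f v) ∧ (∀ (a : K) (v : V), f (a • v) = ‖a‖ * f v) ∧
    (∀ v w, f (v + w) ≤ f v + f w) ∧ ∀ v, f v = 0 → v = 0

/-- `B` is an orthogonal basis for the norm `f` (non-Archimedean sense). -/
def IsOrthBasis {K V : Type*} [NormedField K] [AddCommGroup V] [Module K V] {N : ℕ}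
    (f : V → ℝ) (B : Module.Basis (Fin N) K V) : Prop :=
  ∀ α : Fin N → K, f (∑ i, α i • B i) = ⨆ i, ‖α i‖ * f (B i)

section Helpers

variable {ι : Type*} [Fintype ι]

lemma le_riSup (h : ι → ℝ) (i : ι) : h i ≤ ⨆ j, h j :=
  le_ciSup (Set.finite_range h).bddAbove i

lemma riSup_exists [Nonempty ι] (h : ι → ℝ) : ∃ i, (⨆ j, h j) = h i := by
  obtain ⟨i, hi⟩ := Finite.exists_max h
  exact ⟨i, le_antisymm (ciSup_le hi) (le_riSup h i)⟩

lemma riSup_zero (h : ι → ℝ) (h0 : ∀ i, h i = 0) : (⨆ i, h i) = 0 :=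
  le_antisymm (Real.iSup_le (fun i => (h0 i).le) le_rfl)
    (Real.iSup_nonneg fun i => (h0 i).ge)

lemma riSup_eq_single (h : ι → ℝ) (i : ι) (hnn : 0 ≤ h i)
    (hz : ∀ j, j ≠ i → h j = 0) : (⨆ j, h j) = h i := by
  refine le_antisymm (Real.iSup_le (fun j => ?_) hnn) (le_riSup h i)
  rcases eq_or_ne j i with rfl | hj
  · exact le_rfl
  · rw [hz j hj]; exact hnn

lemma riSup_succAbove {n : ℕ} (h : Fin (n + 1) → ℝ) (p : Fin (n + 1))
    (hp : h p = 0) (hnn : ∀ i, 0 ≤ h i) :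
    (⨆ i, h i) = ⨆ k, h (p.succAbove k) := by
  apply le_antisymm
  · refine Real.iSup_le (fun i => ?_) (Real.iSup_nonneg fun k => hnn _)
    rcases eq_or_ne i p with rfl | hne
    · rw [hp]; exact Real.iSup_nonneg fun k => hnn _
    · obtain ⟨k, hk⟩ := Fin.exists_succAbove_eq hne
      rw [← hk]
      exact le_riSup (fun k => h (p.succAbove k)) k
  · exact Real.iSup_le (fun k => le_riSup h _) (Real.iSup_nonneg hnn)

end Helpers

section NormBasics

variable {K : Type*} [NormedField K] {V : Type*} [AddCommGroup V] [Module K V]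

lemma IsVNorm.zero' {f : V → ℝ} (hf : IsVNorm K f) : f 0 = 0 := by
  have h := hf.2.1 (0 : K) 0
  simpa using h

lemma IsVNorm.pos {f : V → ℝ} (hf : IsVNorm K f) {x : V} (hx : x ≠ 0) : 0 < f x :=
  lt_of_le_of_ne (hf.1 x) (fun h => hx (hf.2.2.2 x h.symm))

lemma orth_repr {N : ℕ} {f : V → ℝ} {B : Module.Basis (Fin N) K V} (hB : IsOrthBasis f B) (x : V) :
    f x = ⨆ i, ‖B.repr x i‖ * f (B i) := by
  conv_lhs => rw [← B.sum_repr x]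
  exact hB _

lemma orth_na (hna : IsNonarchimedean (fun x : K => ‖x‖)) {N : ℕ} {f : V → ℝ}
    (hf : IsVNorm K f) {B : Module.Basis (Fin N) K V} (hB : IsOrthBasis f B) (x y : V) :
    f (x + y) ≤ max (f x) (f y) := by
  rw [orth_repr hB (x + y)]
  refine Real.iSup_le (fun i => ?_) (le_max_of_le_left (hf.1 x))
  have h1 : ‖B.repr (x + y) i‖ ≤ max ‖B.repr x i‖ ‖B.repr y i‖ := by
    rw [map_add]
    exact hna _ _
  calc ‖B.repr (x + y) i‖ * f (B i)
      ≤ max ‖B.repr x i‖ ‖B.repr y i‖ * f (B i) :=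
        mul_le_mul_of_nonneg_right h1 (hf.1 _)
    _ = max (‖B.repr x i‖ * f (B i)) (‖B.repr y i‖ * f (B i)) :=
        max_mul_of_nonneg _ _ (hf.1 _)
    _ ≤ max (f x) (f y) := by
        apply max_le_max
        · rw [orth_repr hB x]
          exact le_riSup (fun i => ‖B.repr x i‖ * f (B i)) i
        · rw [orth_repr hB y]
          exact le_riSup (fun i => ‖B.repr y i‖ * f (B i)) i

lemma na_sum {f : V → ℝ} (hfna : ∀ x y, f (x + y) ≤ max (f x) (f y)) (hf0 : f 0 = 0)
    {ι : Type*} (s : Finset ι) (z : ι → V) {C : ℝ} (hC : 0 ≤ C)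
    (h : ∀ i ∈ s, f (z i) ≤ C) : f (∑ i ∈ s, z i) ≤ C := by
  classical
  induction s using Finset.induction with
  | empty => simpa [hf0] using hC
  | insert _ _ hnotmem ih =>
      rename_i a s
      rw [Finset.sum_insert hnotmem]
      refine le_trans (hfna _ _) (max_le (h _ (Finset.mem_insert_self _ _)) ?_)
      exact ih fun i hi => h i (Finset.mem_insert_of_mem hi)

lemma IsVNorm.comp {W : Type*} [AddCommGroup W] [Module K W] {f : V → ℝ}
    (hf : IsVNorm K f) (e : W ≃ₗ[K] V) : IsVNorm K (fun w => f (e w)) := by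
  refine ⟨fun w => hf.1 _, fun a w => by simp only [map_smul]; exact hf.2.1 _ _,
    fun x y => by simp only [map_add]; exact hf.2.2.1 _ _, fun x hx => ?_⟩
  have h := hf.2.2.2 _ hx
  exact e.injective (by simpa using h)

lemma orth_map {W : Type*} [AddCommGroup W] [Module K W] {N : ℕ} (e : V ≃ₗ[K] W)
    {f : V → ℝ} {B : Module.Basis (Fin N) K V} (hB : IsOrthBasis f B) :
    IsOrthBasis (fun w => f (e.symm w)) (B.map e) := by
  intro α
  have h1 : e.symm (∑ i, α i • (B.map e) i) = ∑ i, α i • B i := by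
    rw [map_sum]
    congr 1
    funext i
    rw [map_smul, Module.Basis.map_apply, e.symm_apply_apply]
  calc f (e.symm (∑ i, α i • (B.map e) i)) = f (∑ i, α i • B i) := by rw [h1]
    _ = ⨆ i, ‖α i‖ * f (B i) := hB α
    _ = ⨆ i, ‖α i‖ * f (e.symm ((B.map e) i)) := by
        congr 1; funext i; rw [Module.Basis.map_apply, e.symm_apply_apply]

end NormBasics

section Core

variable {K : Type*} [NormedField K] {V : Type*} [AddCommGroup V] [Module K V]

/-- coefficients of a sum over an injective subfamily of a basis -/
lemma repr_sum_eq {N n : ℕ} (B : Module.Basis (Fin N) K V) (e : Fin n → Fin N)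
    (he : Function.Injective e) (β : Fin n → K) (k : Fin n) :
    B.repr (∑ k', β k' • B (e k')) (e k) = β k := by
  classical
  rw [map_sum]
  rw [Finsupp.finset_sum_apply]
  rw [Finset.sum_eq_single k]
  · rw [map_smul, Module.Basis.repr_self]
    simp
  · intro k' _ hk'
    rw [map_smul, Module.Basis.repr_self]
    simp [Finsupp.single_apply, he.ne hk']
  · intro h
    exact absurd (Finset.mem_univ k) h

lemma repr_sum_zero {N n : ℕ} (B : Module.Basis (Fin N) K V) (e : Fin n → Fin N)
    (β : Fin n → K) (j : Fin N) (hj : ∀ k, e k ≠ j) :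
    B.repr (∑ k', β k' • B (e k')) j = 0 := by
  classical
  rw [map_sum, Finsupp.finset_sum_apply]
  refine Finset.sum_eq_zero fun k' _ => ?_
  rw [map_smul, Module.Basis.repr_self]
  simp [Finsupp.single_apply, hj k']

/-- Assembly: a vector `v` plus a family `w` orthogonal "modulo `v`" gives an
orthogonal family. -/
lemma orth_cons {n : ℕ} {f : V → ℝ} (hf : IsVNorm K f)
    (hfna : ∀ x y, f (x + y) ≤ max (f x) (f y))
    (v : V) (w : Fin n → V) (p : V → ℝ)
    (hp1 : ∀ x, p x ≤ f x)
    (hp2 : ∀ β : Fin n → K, p (∑ k, β k • w k) = ⨆ k, ‖β k‖ * f (w k))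
    (hpv : ∀ (a : K) (x : V), p (x + a • v) = p x) :
    ∀ α : Fin (n + 1) → K,
      f (∑ i, α i • (Fin.cons v w : Fin (n + 1) → V) i) =
        ⨆ i, ‖α i‖ * f ((Fin.cons v w : Fin (n + 1) → V) i) := by
  intro α
  have hsum : ∑ i, α i • (Fin.cons v w : Fin (n + 1) → V) i
      = α 0 • v + ∑ k, α k.succ • w k := by
    rw [Fin.sum_univ_succ]
    simp
  set u := ∑ k, α k.succ • w k with hu
  have hnnW : (0:ℝ) ≤ ⨆ k, ‖α k.succ‖ * f (w k) :=
    Real.iSup_nonneg fun k => mul_nonneg (norm_nonneg _) (hf.1 _)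
  have hfu_le : f u ≤ ⨆ k, ‖α k.succ‖ * f (w k) := by
    refine na_sum hfna hf.zero' _ _ hnnW fun k _ => ?_
    rw [hf.2.1]
    exact le_riSup (fun k => ‖α k.succ‖ * f (w k)) k
  have hpu : p u = ⨆ k, ‖α k.succ‖ * f (w k) := hp2 _
  have hfu_ge : (⨆ k, ‖α k.succ‖ * f (w k)) ≤ f u := hpu ▸ hp1 u
  have hfu : f u = ⨆ k, ‖α k.succ‖ * f (w k) := le_antisymm hfu_le hfu_ge
  have hpx : p (α 0 • v + u) = p u := by rw [add_comm]; exact hpv _ _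
  have h1 : f u ≤ f (α 0 • v + u) := by
    calc f u = p u := by rw [hpu, ← hfu]
      _ = p (α 0 • v + u) := hpx.symm
      _ ≤ f (α 0 • v + u) := hp1 _
  have h2 : ‖α 0‖ * f v ≤ f (α 0 • v + u) := by
    by_contra hc
    push_neg at hc
    have hle : ‖α 0‖ * f v ≤ max (f (α 0 • v + u)) (f u) := by
      calc ‖α 0‖ * f v = f (α 0 • v) := (hf.2.1 _ _).symm
        _ = f ((α 0 • v + u) + (-1 : K) • u) := by
            congr 1
            rw [neg_one_smul]
            abel
        _ ≤ max (f (α 0 • v + u)) (f ((-1 : K) • u)) := hfna _ _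
        _ = max (f (α 0 • v + u)) (f u) := by rw [hf.2.1, norm_neg, norm_one, one_mul]
    rw [max_eq_left h1] at hle
    exact absurd hle (not_le.mpr hc)
  have h3 : f (α 0 • v + u) ≤ max (‖α 0‖ * f v) (f u) := by
    refine le_trans (hfna _ _) ?_
    rw [hf.2.1]
  have hkey : f (α 0 • v + u) = max (‖α 0‖ * f v) (f u) :=
    le_antisymm h3 (max_le h2 h1)
  rw [hsum, hkey, hfu]
  apply le_antisymm
  · apply max_le
    · have hv0 : ‖α 0‖ * f v = ‖α 0‖ * f ((Fin.cons v w : Fin (n + 1) → V) 0) := by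
        rw [Fin.cons_zero]
      rw [hv0]
      exact le_riSup (fun i => ‖α i‖ * f ((Fin.cons v w : Fin (n + 1) → V) i)) 0
    · refine Real.iSup_le (fun k => ?_)
        (Real.iSup_nonneg fun i => mul_nonneg (norm_nonneg _) (hf.1 _))
      have hwk : ‖α k.succ‖ * f (w k)
          = ‖α k.succ‖ * f ((Fin.cons v w : Fin (n + 1) → V) k.succ) := by
        rw [Fin.cons_succ]
      rw [hwk]
      exact le_riSup (fun i => ‖α i‖ * f ((Fin.cons v w : Fin (n + 1) → V) i)) k.succ
  · have hnn0 : (0:ℝ) ≤ max (‖α 0‖ * f v) (⨆ k, ‖α k.succ‖ * f (w k)) :=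
      le_max_of_le_left (mul_nonneg (norm_nonneg (α 0)) (hf.1 v))
    refine Real.iSup_le (fun i => ?_) hnn0
    induction i using Fin.cases with
    | zero => rw [Fin.cons_zero]; exact le_max_left _ _
    | succ k =>
        rw [Fin.cons_succ]
        exact le_max_of_le_right (le_riSup (fun k => ‖α k.succ‖ * f (w k)) k)

end Core

set_option maxHeartbeats 2000000 in
theorem aux_sim {K : Type u} [NormedField K]
    (hna : IsNonarchimedean (fun x : K => ‖x‖)) :
    ∀ (N : ℕ) (V : Type u) [AddCommGroup V] [Module K V] (f g : V → ℝ),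
      IsVNorm K f → IsVNorm K g →
      ∀ (Bf Bg : Module.Basis (Fin N) K V), IsOrthBasis f Bf → IsOrthBasis g Bg →
      ∃ B : Module.Basis (Fin N) K V, IsOrthBasis f B ∧ IsOrthBasis g B := by
  intro N
  induction N with
  | zero =>
      intro V _ _ f g hf hg Bf Bg hBf hBg
      refine ⟨Bf, hBf, fun α => ?_⟩
      have h1 : ∑ i, α i • Bf i = 0 := by simp
      rw [h1, hg.zero']
      exact (riSup_zero _ (fun i => absurd i.2 (by omega))).symm
  | succ n ih =>
      intro V _ _ f g hf hg Bf Bg hBf hBg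
      classical
      have hfna : ∀ x y, f (x + y) ≤ max (f x) (f y) := orth_na hna hf hBf
      have hgna : ∀ x y, g (x + y) ≤ max (g x) (g y) := orth_na hna hg hBg
      have hfB : ∀ i, 0 < f (Bf i) := fun i => hf.pos (Bf.ne_zero i)
      have hgB : ∀ j, 0 < g (Bg j) := fun j => hg.pos (Bg.ne_zero j)
      -- choose the direction maximizing g/f
      obtain ⟨i0, hi0⟩ := Finite.exists_max (fun i : Fin (n + 1) => g (Bf i) / f (Bf i))
      set v : V := Bf i0 with hv
      have hfv : 0 < f v := hfB i0
      have hgv : 0 < g v := hg.pos (Bf.ne_zero i0)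
      set cst : ℝ := g v / f v with hcst
      have hcst0 : 0 ≤ cst := div_nonneg hgv.le hfv.le
      have hratio : ∀ i, g (Bf i) * f v ≤ g v * f (Bf i) := by
        intro i
        have h := hi0 i
        rwa [div_le_div_iff₀ (hfB i) (hfB i0)] at h
      have hglobal : ∀ x, g x ≤ cst * f x := by
        intro x
        conv_lhs => rw [← Bf.sum_repr x]
        refine na_sum hgna hg.zero' _ _ (mul_nonneg hcst0 (hf.1 x)) fun i _ => ?_
        rw [hg.2.1]
        have h1 : ‖Bf.repr x i‖ * f (Bf i) ≤ f x := by
          rw [orth_repr hBf x]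
          exact le_riSup (fun i => ‖Bf.repr x i‖ * f (Bf i)) i
        have h2 : g (Bf i) ≤ cst * f (Bf i) := by
          rw [hcst, div_mul_eq_mul_div, le_div_iff₀ hfv]
          linarith [hratio i]
        calc ‖Bf.repr x i‖ * g (Bf i) ≤ ‖Bf.repr x i‖ * (cst * f (Bf i)) :=
              mul_le_mul_of_nonneg_left h2 (norm_nonneg _)
          _ = cst * (‖Bf.repr x i‖ * f (Bf i)) := by ring
          _ ≤ cst * f x := mul_le_mul_of_nonneg_left h1 hcst0
      -- choose j0 realizing g v in the g-orthogonal basis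
      obtain ⟨j0, hj0⟩ := riSup_exists (fun j => ‖Bg.repr v j‖ * g (Bg j))
      have hgv_eq : g v = ‖Bg.repr v j0‖ * g (Bg j0) := by
        rw [orth_repr hBg v]; exact hj0
      have hγ0 : Bg.repr v j0 ≠ 0 := by
        intro h
        rw [h] at hgv_eq
        simp at hgv_eq
        exact hgv.ne' hgv_eq
      set γ0 : K := Bg.repr v j0 with hγ0def
      set b : V → K := fun x => Bg.repr x j0 / γ0 with hb
      set cc : V → Fin (n + 1) → K := fun x j => Bg.repr x j - b x * Bg.repr v j with hcc
      set gh : V → ℝ := fun x => ⨆ j, ‖cc x j‖ * g (Bg j) with hgh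
      have hbγ : ∀ x, b x * γ0 = Bg.repr x j0 := fun x => div_mul_cancel₀ _ hγ0
      have hbv : b v = 1 := div_self hγ0
      have hreprc : ∀ x j, Bg.repr x j = b x * Bg.repr v j + cc x j := by
        intro x j; simp [hcc]
      have hgh_nonneg : ∀ x, 0 ≤ gh x :=
        fun x => Real.iSup_nonneg fun j => mul_nonneg (norm_nonneg _) (hg.1 _)
      have hbgv_le : ∀ x, ‖b x‖ * g v ≤ g x := by
        intro x
        have h1 : ‖b x‖ * g v = ‖Bg.repr x j0‖ * g (Bg j0) := by
          rw [hgv_eq, ← mul_assoc, ← norm_mul, hbγ]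
        rw [h1, orth_repr hBg x]
        exact le_riSup (fun j => ‖Bg.repr x j‖ * g (Bg j)) j0
      have hγj_le : ∀ j, ‖Bg.repr v j‖ * g (Bg j) ≤ g v := by
        intro j
        rw [orth_repr hBg v]
        exact le_riSup (fun j => ‖Bg.repr v j‖ * g (Bg j)) j
      have hgh_le : ∀ x, gh x ≤ g x := by
        intro x
        refine Real.iSup_le (fun j => ?_) (hg.1 x)
        have h1 : ‖cc x j‖ ≤ max ‖Bg.repr x j‖ ‖b x * Bg.repr v j‖ := by
          have h2 := hna (Bg.repr x j) (-(b x * Bg.repr v j))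
          simpa [hcc, sub_eq_add_neg] using h2
        calc ‖cc x j‖ * g (Bg j)
            ≤ max ‖Bg.repr x j‖ ‖b x * Bg.repr v j‖ * g (Bg j) :=
              mul_le_mul_of_nonneg_right h1 (hg.1 _)
          _ = max (‖Bg.repr x j‖ * g (Bg j)) (‖b x * Bg.repr v j‖ * g (Bg j)) :=
              max_mul_of_nonneg _ _ (hg.1 _)
          _ ≤ g x := by
              apply max_le
              · rw [orth_repr hBg x]
                exact le_riSup (fun j => ‖Bg.repr x j‖ * g (Bg j)) j
              · rw [norm_mul, mul_assoc]
                calc ‖b x‖ * (‖Bg.repr v j‖ * g (Bg j)) ≤ ‖b x‖ * g v :=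
                      mul_le_mul_of_nonneg_left (hγj_le j) (norm_nonneg _)
                  _ ≤ g x := hbgv_le x
      have hclaim : ∀ x, g x = max (‖b x‖ * g v) (gh x) := by
        intro x
        apply le_antisymm
        · conv_lhs => rw [orth_repr hBg x]
          refine Real.iSup_le (fun j => ?_)
            (le_max_of_le_left (mul_nonneg (norm_nonneg _) (hg.1 v)))
          have h1 : ‖Bg.repr x j‖ ≤ max ‖b x * Bg.repr v j‖ ‖cc x j‖ := by
            have h2 := hna (b x * Bg.repr v j) (cc x j)
            rw [← hreprc] at h2
            exact h2
          calc ‖Bg.repr x j‖ * g (Bg j)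
              ≤ max ‖b x * Bg.repr v j‖ ‖cc x j‖ * g (Bg j) :=
                mul_le_mul_of_nonneg_right h1 (hg.1 _)
            _ = max (‖b x * Bg.repr v j‖ * g (Bg j)) (‖cc x j‖ * g (Bg j)) :=
                max_mul_of_nonneg _ _ (hg.1 _)
            _ ≤ max (‖b x‖ * g v) (gh x) := by
                apply max_le_max
                · rw [norm_mul, mul_assoc]
                  exact mul_le_mul_of_nonneg_left (hγj_le j) (norm_nonneg _)
                · exact le_riSup (fun j => ‖cc x j‖ * g (Bg j)) j
        · exact max_le (hbgv_le x) (hgh_le x)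
      have hb_add : ∀ (x : V) (t : K), b (x + t • v) = b x + t := by
        intro x t
        simp only [hb, map_add, map_smul, Finsupp.coe_add, Finsupp.coe_smul, Pi.add_apply,
          Pi.smul_apply, smul_eq_mul]
        rw [add_div, ← hγ0def, mul_div_assoc, div_self hγ0, mul_one]
      have hcc_add : ∀ (x : V) (t : K) (j : Fin (n + 1)), cc (x + t • v) j = cc x j := by
        intro x t j
        simp only [hcc, hb_add, map_add, map_smul, Finsupp.coe_add, Finsupp.coe_smul,
          Pi.add_apply, Pi.smul_apply, smul_eq_mul]
        ring
      have hgh_add : ∀ (x : V) (t : K), gh (x + t • v) = gh x := by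
        intro x t
        simp only [hgh, hcc_add]
      -- f-side: explicit quotient by K·v using the basis Bf
      set emb : Fin n → Fin (n + 1) := i0.succAbove with hemb
      have hembinj : Function.Injective emb := Fin.succAbove_right_injective
      have hembne : ∀ k, emb k ≠ i0 := fun k => Fin.succAbove_ne i0 k
      set s : (Fin n → K) → V := fun y => ∑ k, y k • Bf (emb k) with hs
      set q : V → (Fin n → K) := fun x k => Bf.repr x (emb k) with hq
      have hqs : ∀ y, q (s y) = y := by
        intro y
        funext k
        exact repr_sum_eq Bf emb hembinj y k
      have hsv0 : ∀ y, Bf.repr (s y) i0 = 0 := by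
        intro y
        exact repr_sum_zero Bf emb y i0 hembne
      have hqv : q v = 0 := by
        funext k
        simp only [hq, hv, Module.Basis.repr_self]
        exact Finsupp.single_eq_of_ne (hembne k)
      have hq_add : ∀ x y, q (x + y) = q x + q y := by
        intro x y; funext k; simp [hq]
      have hq_smul : ∀ (a : K) x, q (a • x) = a • q x := by
        intro a x; funext k; simp [hq]
      have hq_sum : ∀ {m : ℕ} (z : Fin m → V), q (∑ k, z k) = ∑ k, q (z k) := by
        intro m z
        funext k
        simp [hq, Finsupp.finset_sum_apply, Finset.sum_apply]
      have hI1 : ∀ x, x = s (q x) + Bf.repr x i0 • v := by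
        intro x
        conv_lhs => rw [← Bf.sum_repr x]
        rw [Fin.sum_univ_succAbove (fun i => Bf.repr x i • Bf i) i0, add_comm]
      set f' : (Fin n → K) → ℝ := fun y => ⨆ k, ‖y k‖ * f (Bf (emb k)) with hf'def
      have hf'_nonneg : ∀ y, 0 ≤ f' y :=
        fun y => Real.iSup_nonneg fun k => mul_nonneg (norm_nonneg _) (hf.1 _)
      have hfs : ∀ y, f (s y) = f' y := by
        intro y
        rw [orth_repr hBf (s y),
          riSup_succAbove (fun i => ‖Bf.repr (s y) i‖ * f (Bf i)) i0
            (by show ‖(Bf.repr (s y)) i0‖ * f (Bf i0) = 0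
                rw [hsv0 y, norm_zero, zero_mul])
            (fun i => mul_nonneg (norm_nonneg _) (hf.1 _))]
        have h1 : ∀ k, Bf.repr (s y) (i0.succAbove k) = y k := fun k =>
          repr_sum_eq Bf emb hembinj y k
        simp only [h1]
        rfl
      have hf'q_le : ∀ x, f' (q x) ≤ f x := by
        intro x
        refine Real.iSup_le (fun k => ?_) (hf.1 x)
        rw [orth_repr hBf x]
        exact le_riSup (fun i => ‖Bf.repr x i‖ * f (Bf i)) (emb k)
      set g' : (Fin n → K) → ℝ := fun y => gh (s y) with hg'def
      have hghq : ∀ x, gh x = g' (q x) := by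
        intro x
        conv_lhs => rw [hI1 x]
        exact hgh_add _ _
      -- f' is a vector norm
      have hs_smul : ∀ (a : K) y, s (a • y) = a • s y := by
        intro a y
        simp only [hs, Pi.smul_apply, smul_eq_mul, Finset.smul_sum, smul_smul]
      have hs_add : ∀ y z, s (y + z) = s y + s z := by
        intro y z
        simp only [hs, Pi.add_apply, add_smul, Finset.sum_add_distrib]
      have hf' : IsVNorm K f' := by
        refine ⟨hf'_nonneg, ?_, ?_, ?_⟩
        · intro a y
          simp only [hf'def, Pi.smul_apply, smul_eq_mul, norm_mul, mul_assoc]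
          rw [← Real.mul_iSup_of_nonneg (norm_nonneg a)]
        · intro y z
          have h1 : f' (y + z) ≤ max (f' y) (f' z) := by
            refine Real.iSup_le (fun k => ?_) (le_max_of_le_left (hf'_nonneg y))
            have h2 : ‖(y + z) k‖ ≤ max ‖y k‖ ‖z k‖ := hna _ _
            calc ‖(y + z) k‖ * f (Bf (emb k))
                ≤ max ‖y k‖ ‖z k‖ * f (Bf (emb k)) :=
                  mul_le_mul_of_nonneg_right h2 (hf.1 _)
              _ = max (‖y k‖ * f (Bf (emb k))) (‖z k‖ * f (Bf (emb k))) :=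
                  max_mul_of_nonneg _ _ (hf.1 _)
              _ ≤ max (f' y) (f' z) :=
                  max_le_max (le_riSup (fun k => ‖y k‖ * f (Bf (emb k))) k)
                    (le_riSup (fun k => ‖z k‖ * f (Bf (emb k))) k)
          exact le_trans h1 (max_le (le_add_of_nonneg_right (hf'_nonneg z))
            (le_add_of_nonneg_left (hf'_nonneg y)))
        · intro y hy
          funext k
          have h1 : ‖y k‖ * f (Bf (emb k)) ≤ 0 := by
            rw [← hy]
            exact le_riSup (fun k => ‖y k‖ * f (Bf (emb k))) k
          have h2 : ‖y k‖ = 0 := by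
            by_contra h3
            have h4 : 0 < ‖y k‖ := lt_of_le_of_ne (norm_nonneg _) (Ne.symm h3)
            nlinarith [hfB (emb k)]
          simpa using norm_eq_zero.mp h2
      -- g' is a vector norm
      have hcc_smul : ∀ (a : K) x j, cc (a • x) j = a * cc x j := by
        intro a x j
        simp only [hcc, hb, map_smul, Finsupp.coe_smul, Pi.smul_apply, smul_eq_mul]
        field_simp
      have hcc_addxy : ∀ x y j, cc (x + y) j = cc x j + cc y j := by
        intro x y j
        simp only [hcc, hb, map_add, Finsupp.coe_add, Pi.add_apply]
        ring
      have hgh_smul : ∀ (a : K) x, gh (a • x) = ‖a‖ * gh x := by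
        intro a x
        simp only [hgh, hcc_smul, norm_mul, mul_assoc]
        rw [← Real.mul_iSup_of_nonneg (norm_nonneg a)]
      have hg'_nonneg : ∀ y, 0 ≤ g' y := fun y => hgh_nonneg _
      have hg' : IsVNorm K g' := by
        refine ⟨hg'_nonneg, ?_, ?_, ?_⟩
        · intro a y
          simp only [hg'def]
          rw [hs_smul, hgh_smul]
        · intro y z
          simp only [hg'def]
          rw [hs_add]
          have h1 : gh (s y + s z) ≤ max (gh (s y)) (gh (s z)) := by
            refine Real.iSup_le (fun j => ?_) (le_max_of_le_left (hgh_nonneg _))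
            have h2 : ‖cc (s y + s z) j‖ ≤ max ‖cc (s y) j‖ ‖cc (s z) j‖ := by
              rw [hcc_addxy]
              exact hna _ _
            calc ‖cc (s y + s z) j‖ * g (Bg j)
                ≤ max ‖cc (s y) j‖ ‖cc (s z) j‖ * g (Bg j) :=
                  mul_le_mul_of_nonneg_right h2 (hg.1 _)
              _ = max (‖cc (s y) j‖ * g (Bg j)) (‖cc (s z) j‖ * g (Bg j)) :=
                  max_mul_of_nonneg _ _ (hg.1 _)
              _ ≤ max (gh (s y)) (gh (s z)) :=
                  max_le_max (le_riSup (fun j => ‖cc (s y) j‖ * g (Bg j)) j)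
                    (le_riSup (fun j => ‖cc (s z) j‖ * g (Bg j)) j)
          exact le_trans h1 (max_le (le_add_of_nonneg_right (hgh_nonneg _))
            (le_add_of_nonneg_left (hgh_nonneg _)))
        · intro y hy
          have hccz : ∀ j, cc (s y) j = 0 := by
            intro j
            have h1 : ‖cc (s y) j‖ * g (Bg j) ≤ 0 := by
              rw [← hy]
              exact le_riSup (fun j => ‖cc (s y) j‖ * g (Bg j)) j
            have h2 : ‖cc (s y) j‖ = 0 := by
              by_contra h3
              have h4 : 0 < ‖cc (s y) j‖ := lt_of_le_of_ne (norm_nonneg _) (Ne.symm h3)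
              nlinarith [hgB j]
            exact norm_eq_zero.mp h2
          have hsy : s y = b (s y) • v := by
            have h5 : ∀ j, Bg.repr (s y) j = Bg.repr (b (s y) • v) j := by
              intro j
              rw [hreprc (s y) j, hccz j, add_zero, map_smul]
              simp
            have h6 : Bg.repr (s y) = Bg.repr (b (s y) • v) := Finsupp.ext h5
            exact Bg.repr.injective h6
          have h7 : y = 0 := by
            have h8 := hqs y
            rw [hsy, hq_smul, hqv, smul_zero] at h8
            exact h8.symm
          exact h7
      -- orthogonal basis of f' : the standard basis
      have hP : IsOrthBasis f' (Pi.basisFun K (Fin n)) := by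
        intro α
        have h1 : ∑ k, α k • Pi.basisFun K (Fin n) k = α := by
          funext k'
          simp [Pi.basisFun_apply, Finset.sum_apply, Pi.single_apply]
        have h2 : ∀ k, f' (Pi.basisFun K (Fin n) k) = f (Bf (emb k)) := by
          intro k
          have h3 : (⨆ k', ‖(Pi.basisFun K (Fin n) k) k'‖ * f (Bf (emb k')))
              = ‖(Pi.basisFun K (Fin n) k) k‖ * f (Bf (emb k)) := by
            refine riSup_eq_single _ k (mul_nonneg (norm_nonneg _) (hf.1 _)) ?_
            intro j hj
            simp [Pi.basisFun_apply, Pi.single_apply, hj]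
          calc f' (Pi.basisFun K (Fin n) k)
              = ‖(Pi.basisFun K (Fin n) k) k‖ * f (Bf (emb k)) := h3
            _ = f (Bf (emb k)) := by simp [Pi.basisFun_apply]
        rw [h1]
        simp only [h2]
        rfl
      -- orthogonal basis of g' : image of the g-basis
      set embg : Fin n → Fin (n + 1) := j0.succAbove with hembg
      have hembginj : Function.Injective embg := Fin.succAbove_right_injective
      have hembgne : ∀ k, embg k ≠ j0 := fun k => Fin.succAbove_ne j0 k
      set D : Fin n → (Fin n → K) := fun k => q (Bg (embg k)) with hD
      have hghBg : ∀ (j' : Fin (n + 1)), j' ≠ j0 → gh (Bg j') = g (Bg j') := by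
        intro j' hj'
        have hb0 : b (Bg j') = 0 := by
          simp only [hb, Module.Basis.repr_self]
          rw [Finsupp.single_eq_of_ne (Ne.symm hj')]
          simp
        have hccval : ∀ j, cc (Bg j') j = if j' = j then 1 else 0 := by
          intro j
          simp only [hcc, hb0, Module.Basis.repr_self, zero_mul, sub_zero]
          rw [Finsupp.single_apply]
        have h3 : (⨆ j, ‖cc (Bg j') j‖ * g (Bg j)) = ‖cc (Bg j') j'‖ * g (Bg j') := by
          refine riSup_eq_single _ j' (mul_nonneg (norm_nonneg _) (hg.1 _)) ?_
          intro j hj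
          rw [hccval j, if_neg (Ne.symm hj)]
          simp
        calc gh (Bg j') = ‖cc (Bg j') j'‖ * g (Bg j') := h3
          _ = g (Bg j') := by rw [hccval j', if_pos rfl]; simp
      have hDval : ∀ k, g' (D k) = g (Bg (embg k)) := by
        intro k
        have h1 : g' (D k) = gh (Bg (embg k)) := (hghq _).symm
        rw [h1]
        exact hghBg _ (hembgne k)
      have hDsum : ∀ β : Fin n → K, ∑ k, β k • D k = q (∑ k, β k • Bg (embg k)) := by
        intro β
        rw [hq_sum (fun k => β k • Bg (embg k))]
        congr 1
        funext k
        rw [hq_smul]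
      have horthD : ∀ β : Fin n → K,
          g' (∑ k, β k • D k) = ⨆ k, ‖β k‖ * g' (D k) := by
        intro β
        rw [hDsum, ← hghq]
        set u : V := ∑ k, β k • Bg (embg k) with hudef
        have hbu : b u = 0 := by
          simp only [hb]
          rw [repr_sum_zero Bg embg β j0 hembgne]
          simp
        have hccu : ∀ j, cc u j = Bg.repr u j := by
          intro j
          simp only [hcc, hbu, zero_mul, sub_zero]
        have h1 : gh u = ⨆ j, ‖Bg.repr u j‖ * g (Bg j) := by
          simp only [hgh, hccu]
        rw [h1, riSup_succAbove (fun j => ‖Bg.repr u j‖ * g (Bg j)) j0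
          (by show ‖(Bg.repr u) j0‖ * g (Bg j0) = 0
              rw [repr_sum_zero Bg embg β j0 hembgne, norm_zero, zero_mul])
          (fun j => mul_nonneg (norm_nonneg _) (hg.1 _))]
        have h2 : ∀ k, Bg.repr u (j0.succAbove k) = β k := fun k =>
          repr_sum_eq Bg embg hembginj β k
        simp only [h2, hDval]
        rfl
      -- D is a basis (or a trivial substitute when n = 0)
      have hDb : ∃ Db : Module.Basis (Fin n) K (Fin n → K), IsOrthBasis g' Db := by
        rcases Nat.eq_zero_or_pos n with hn | hn
        · subst hn
          refine ⟨Pi.basisFun K (Fin 0), fun α => ?_⟩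
          have h1 : ∑ i, α i • Pi.basisFun K (Fin 0) i = 0 := by simp
          rw [h1]
          have h2 : g' (0 : Fin 0 → K) = 0 := by
            have := hg'.zero'
            simpa using this
          rw [h2]
          exact (riSup_zero _ (fun i => absurd i.2 (by omega))).symm
        · haveI : Nonempty (Fin n) := ⟨⟨0, hn⟩⟩
          have hDli : LinearIndependent K D := by
            rw [Fintype.linearIndependent_iff]
            intro β hβ
            have h1 := horthD β
            rw [hβ] at h1
            have hg'0 : g' (0 : Fin n → K) = 0 := by
              have := hg'.zero'
              simpa using this
            intro k
            have hk : ‖β k‖ * g' (D k) ≤ 0 := by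
              rw [← hg'0, h1]
              exact le_riSup (fun k => ‖β k‖ * g' (D k)) k
            have h2 : 0 < g' (D k) := by rw [hDval]; exact hgB _
            have h3 : ‖β k‖ = 0 := by nlinarith [norm_nonneg (β k)]
            exact norm_eq_zero.mp h3
          have hcard : Fintype.card (Fin n) = Module.finrank K (Fin n → K) := by
            simp [Module.finrank_fin_fun]
          refine ⟨basisOfLinearIndependentOfCardEqFinrank hDli hcard, fun β => ?_⟩
          rw [coe_basisOfLinearIndependentOfCardEqFinrank]
          exact horthD β
      obtain ⟨Db, hDbOrth⟩ := hDb
      -- induction hypothesis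
      obtain ⟨B', hB'f, hB'g⟩ := ih (Fin n → K) f' g' hf' hg' (Pi.basisFun K (Fin n)) Db hP hDbOrth
      -- simultaneous optimal lifts
      have hlift : ∀ y : Fin n → K, ∃ x : V, q x = y ∧ f x = f' y ∧ g x = g' y := by
        intro y
        by_cases hcase : ‖b (s y)‖ * g v ≤ g' y
        · refine ⟨s y, hqs y, hfs y, ?_⟩
          rw [hclaim (s y)]
          exact max_eq_right hcase
        · push_neg at hcase
          have hqx : q (s y + (-(b (s y))) • v) = y := by
            rw [hq_add, hq_smul, hqv, smul_zero, add_zero, hqs]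
          refine ⟨s y + (-(b (s y))) • v, hqx, ?_, ?_⟩
          · apply le_antisymm
            · refine le_trans (hfna _ _) (max_le (le_of_eq (hfs y)) ?_)
              rw [hf.2.1, norm_neg]
              have h1 : g (s y) ≤ cst * f (s y) := hglobal _
              have h2 : g (s y) = ‖b (s y)‖ * g v := by
                rw [hclaim (s y)]
                exact max_eq_left hcase.le
              rw [h2, hfs y, hcst] at h1
              rw [div_mul_eq_mul_div, le_div_iff₀ hfv] at h1
              nlinarith
            · calc f' y = f' (q (s y + (-(b (s y))) • v)) := by rw [hqx]
                _ ≤ f (s y + (-(b (s y))) • v) := hf'q_le _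
          · rw [hclaim]
            have hb' : b (s y + (-(b (s y))) • v) = 0 := by
              rw [hb_add]
              ring
            rw [hb', norm_zero, zero_mul]
            have hgh' : gh (s y + (-(b (s y))) • v) = g' y := hgh_add _ _
            rw [hgh']
            exact max_eq_right (hg'_nonneg y)
      choose w hw1 hw2 hw3 using hlift
      set wB : Fin n → V := fun k => w (B' k) with hwB
      set E : Fin (n + 1) → V := Fin.cons v wB with hE
      have hvne : v ≠ 0 := Bf.ne_zero i0
      have hq_wsum : ∀ β : Fin n → K, q (∑ k, β k • wB k) = ∑ k, β k • B' k := by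
        intro β
        rw [hq_sum (fun k => β k • wB k)]
        congr 1
        funext k
        rw [hq_smul, hw1]
      have hEli : LinearIndependent K E := by
        rw [Fintype.linearIndependent_iff]
        intro α hα
        rw [Fin.sum_univ_succ] at hα
        simp only [hE, Fin.cons_zero, Fin.cons_succ] at hα
        have hqzero : q (0 : V) = 0 := by funext k; simp [hq]
        have hq0 : ∑ k, α k.succ • B' k = 0 := by
          have h1 := congrArg q hα
          rw [hq_add, hq_smul, hqv, smul_zero, zero_add, hq_wsum, hqzero] at h1
          exact h1
        have hβ0 : ∀ k : Fin n, α k.succ = 0 :=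
          Fintype.linearIndependent_iff.mp B'.linearIndependent _ hq0
        have hα0 : α 0 = 0 := by
          rw [Finset.sum_eq_zero (fun k _ => by rw [hβ0 k, zero_smul]), add_zero] at hα
          rcases smul_eq_zero.mp hα with h | h
          · exact h
          · exact absurd h hvne
        intro i
        induction i using Fin.cases with
        | zero => exact hα0
        | succ k => exact hβ0 k
      haveI : Module.Finite K V := Module.Finite.of_basis Bf
      have hcardE : Fintype.card (Fin (n + 1)) = Module.finrank K V :=
        (Module.finrank_eq_card_basis Bf).symm
      refine ⟨basisOfLinearIndependentOfCardEqFinrank hEli hcardE, ?_, ?_⟩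
      · intro α
        rw [coe_basisOfLinearIndependentOfCardEqFinrank]
        refine orth_cons hf hfna v wB (fun x => f' (q x)) hf'q_le ?_ ?_ α
        · intro β
          show f' (q (∑ k, β k • wB k)) = ⨆ k, ‖β k‖ * f (wB k)
          rw [hq_wsum, hB'f β]
          congr 1
          funext k
          simp only [hwB]
          rw [hw2]
        · intro a x
          show f' (q (x + a • v)) = f' (q x)
          rw [hq_add, hq_smul, hqv, smul_zero, add_zero]
      · intro α
        rw [coe_basisOfLinearIndependentOfCardEqFinrank]
        refine orth_cons hg hgna v wB gh hgh_le ?_ (fun a x => hgh_add x a) α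
        intro β
        show gh (∑ k, β k • wB k) = ⨆ k, ‖β k‖ * g (wB k)
        rw [hghq, hq_wsum, hB'g β]
        congr 1
        funext k
        simp only [hwB]
        rw [hw3]

/-- Over a complete non-Archimedean field, any two diagonalizable norms admit a
simultaneous orthogonal basis. -/
theorem exists_simultaneous_orthogonal_basis
    {K V : Type*} [NormedField K] [CompleteSpace K]
    [AddCommGroup V] [Module K V] [FiniteDimensional K V] {N : ℕ}
    (hna : IsNonarchimedean (fun x : K => ‖x‖))
    (f g : V → ℝ) (hf : IsVNorm K f) (hg : IsVNorm K g)
    (hfd : ∃ B : Module.Basis (Fin N) K V, IsOrthBasis f B)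
    (hgd : ∃ B : Module.Basis (Fin N) K V, IsOrthBasis g B) :
    ∃ B : Module.Basis (Fin N) K V, IsOrthBasis f B ∧ IsOrthBasis g B := by
  obtain ⟨Bf, hBf⟩ := hfd
  obtain ⟨Bg, hBg⟩ := hgd
  let e : V ≃ₗ[K] (Fin N → K) := Bf.equivFun
  have hF : IsVNorm K (fun y : Fin N → K => f (e.symm y)) := hf.comp e.symm
  have hG : IsVNorm K (fun y : Fin N → K => g (e.symm y)) := hg.comp e.symm
  obtain ⟨B, hBF, hBG⟩ := aux_sim hna N (Fin N → K)
    (fun y => f (e.symm y)) (fun y => g (e.symm y)) hF hG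
    (Bf.map e) (Bg.map e) (orth_map e hBf) (orth_map e hBg)
  refine ⟨B.map e.symm, ?_, ?_⟩
  · have h := orth_map e.symm hBF
    intro α
    have h1 := h α
    simp only [LinearEquiv.symm_symm, LinearEquiv.symm_apply_apply] at h1
    exact h1
  · have h := orth_map e.symm hBG
    intro α
    have h1 := h α
    simp only [LinearEquiv.symm_symm, LinearEquiv.symm_apply_apply] at h1
    exact h1
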